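/- arXiv:2402.14516 — 6 statements merged into one kernel-verified Lean document; each statement's English description precedes it below -/
import Mathlib

section
/- Let g ≥ 2 be an integer and let s₂, s₃, …, s_{g+2} be nonnegative real numbers (with s₂ possibly any real). Define χ = (g·s₂ + (g²−2g−1)·s_{g+2})/(4(2g+1)) + Σ_{k=1}^{⌊g/2⌋} k(g−k)/(2g+1) · s_{2k+1} + Σ_{k=2}^{⌊(g+1)/2⌋} k(g−k+1)/(2(2g+1)) · s_{2k} and K = (g−1)(s₂ + (3g+1)s_{g+2})/(2g+1) + Σ_{k=1}^{⌊g/2⌋} (12k(g−k)−2g−1)/(2g+1) · s_{2k+1} + Σ_{k=2}^{⌊(g+1)/2⌋} (6k(g−k+1)−4g−2)/(2g+1) · s_{2k}. Then K − (4(g−1)/g)·χ = ((g²−1)/g)·s_{g+2} + Σ_{k=1}^{⌊g/2⌋} (4k(g−k)−g)/g · s_{2k+1} + Σ_{k=2}^{⌊(g+1)/2⌋} (2k(g−k+1)−2g)/g · s_{2k}. -/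
open Finset

theorem stmt_0 (g : ℕ) (hg : 2 ≤ g) (s : ℕ → ℝ)
    (hs : ∀ i, 3 ≤ i → i ≤ g + 2 → 0 ≤ s i)
    (χ K : ℝ)
    (hχ : χ = ((g : ℝ) * s 2 + ((g : ℝ)^2 - 2*g - 1) * s (g+2)) / (4*(2*g+1))
      + ∑ k ∈ Finset.Icc 1 (g/2), (k : ℝ) * ((g : ℝ) - k) / (2*g+1) * s (2*k+1)
      + ∑ k ∈ Finset.Icc 2 ((g+1)/2), (k : ℝ) * ((g : ℝ) - k + 1) / (2*(2*g+1)) * s (2*k))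
    (hK : K = ((g : ℝ) - 1) * (s 2 + (3*(g : ℝ)+1) * s (g+2)) / (2*g+1)
      + ∑ k ∈ Finset.Icc 1 (g/2), (12*(k : ℝ)*((g : ℝ) - k) - 2*g - 1) / (2*g+1) * s (2*k+1)
      + ∑ k ∈ Finset.Icc 2 ((g+1)/2), (6*(k : ℝ)*((g : ℝ) - k + 1) - 4*g - 2) / (2*g+1) * s (2*k)) :
    K - (4*((g : ℝ)-1)/g) * χ
      = (((g : ℝ)^2 - 1)/g) * s (g+2)
      + ∑ k ∈ Finset.Icc 1 (g/2), (4*(k : ℝ)*((g : ℝ) - k) - g)/g * s (2*k+1)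
      + ∑ k ∈ Finset.Icc 2 ((g+1)/2), (2*(k : ℝ)*((g : ℝ) - k + 1) - 2*g)/g * s (2*k) := by
  subst hχ hK
  have hg0 : (g : ℝ) ≠ 0 := by positivity
  have h2g : (2*(g:ℝ)+1) ≠ 0 := by positivity
  set c : ℝ := 4*((g : ℝ)-1)/g with hc
  have e0 : ((g : ℝ) - 1) * (s 2 + (3*(g : ℝ)+1) * s (g+2)) / (2*g+1)
      - c * (((g : ℝ) * s 2 + ((g : ℝ)^2 - 2*g - 1) * s (g+2)) / (4*(2*g+1)))
      = (((g : ℝ)^2 - 1)/g) * s (g+2) := by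
    rw [hc]; field_simp; ring
  have e1 : (∑ k ∈ Finset.Icc 1 (g/2), (12*(k : ℝ)*((g : ℝ) - k) - 2*g - 1) / (2*g+1) * s (2*k+1))
      - c * ∑ k ∈ Finset.Icc 1 (g/2), (k : ℝ) * ((g : ℝ) - k) / (2*g+1) * s (2*k+1)
      = ∑ k ∈ Finset.Icc 1 (g/2), (4*(k : ℝ)*((g : ℝ) - k) - g)/g * s (2*k+1) := by
    rw [Finset.mul_sum, ← Finset.sum_sub_distrib]
    refine Finset.sum_congr rfl fun k hk => ?_
    rw [hc]; field_simp; ring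
  have e2 : (∑ k ∈ Finset.Icc 2 ((g+1)/2), (6*(k : ℝ)*((g : ℝ) - k + 1) - 4*g - 2) / (2*g+1) * s (2*k))
      - c * ∑ k ∈ Finset.Icc 2 ((g+1)/2), (k : ℝ) * ((g : ℝ) - k + 1) / (2*(2*g+1)) * s (2*k)
      = ∑ k ∈ Finset.Icc 2 ((g+1)/2), (2*(k : ℝ)*((g : ℝ) - k + 1) - 2*g)/g * s (2*k) := by
    rw [Finset.mul_sum, ← Finset.sum_sub_distrib]
    refine Finset.sum_congr rfl fun k hk => ?_
    rw [hc]; field_simp; ring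
  linarith [e0, e1, e2]
end

section
/- Let g ≥ 2 be an integer, n a positive integer, λ a real with 4 < λ, and χ > 0 a real. Let s_{2k+1} (1 ≤ k ≤ ⌊g/2⌋), s_{2k} (2 ≤ k ≤ ⌊(g+1)/2⌋), s_{g+2} be nonnegative integers satisfying: (λ−4)χ + 2n = (2g+2)s_{g+2} + Σ_{k=1}^{⌊g/2⌋}(4k−1)s_{2k+1} + Σ_{k=2}^{⌊(g+1)/2⌋} 2(k−1)s_{2k}, and e + (g+1)(2g+4)s_{g+2} + Σ_{k=1}^{⌊g/2⌋}(8k²+4k−1)s_{2k+1} + Σ_{k=2}^{⌊(g+1)/2⌋}(4k²−2k−2)s_{2k} = 2n(2g+1) for some e ≥ 0 with e = 12χ − λχ. Then g ≤ ((λ−4)²/(4n))χ² + (λ−4 + λ/(2n))χ + n + 1. -/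
open Finset

private lemma aux_term (c1 c2 : ℝ) (s : ℕ) (h0 : 0 ≤ c1) (h : c2 ≤ c1^2 + 3*c1) :
    c2 * s ≤ (c1*s)^2 + 3*(c1*s) := by
  rcases Nat.eq_zero_or_pos s with hs | hs
  · simp [hs]
  · have h1 : (1:ℝ) ≤ s := by exact_mod_cast hs
    nlinarith [mul_nonneg h0 (le_trans zero_le_one h1), sq_nonneg c1, sq_nonneg ((s:ℝ) - 1)]

set_option maxHeartbeats 2000000 in
theorem stmt_2 (g n : ℕ) (hg : 2 ≤ g) (hn : 0 < n)
    (lam χ e : ℝ) (hlam : 4 < lam) (hχ : 0 < χ) (he : 0 ≤ e)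
    (heq : e = 12 * χ - lam * χ)
    (s : ℕ → ℕ)
    (h1 : (lam - 4) * χ + 2 * n
      = (2*(g : ℝ)+2) * s (g+2)
      + ∑ k ∈ Finset.Icc 1 (g/2), (4*(k : ℝ) - 1) * s (2*k+1)
      + ∑ k ∈ Finset.Icc 2 ((g+1)/2), 2*((k : ℝ) - 1) * s (2*k))
    (h2 : e + ((g : ℝ)+1)*(2*g+4) * s (g+2)
      + ∑ k ∈ Finset.Icc 1 (g/2), (8*(k : ℝ)^2 + 4*k - 1) * s (2*k+1)
      + ∑ k ∈ Finset.Icc 2 ((g+1)/2), (4*(k : ℝ)^2 - 2*k - 2) * s (2*k)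
      = 2 * n * (2*(g : ℝ)+1)) :
    (g : ℝ) ≤ (lam - 4)^2/(4*n) * χ^2 + (lam - 4 + lam/(2*n)) * χ + n + 1 := by
  set b : ℕ → ℝ := fun k => (4*(k:ℝ) - 1) * s (2*k+1) with hbdef
  set c : ℕ → ℝ := fun k => 2*((k:ℝ) - 1) * s (2*k) with hcdef
  set A : ℝ := (2*(g : ℝ)+2) * s (g+2) with hAdef
  -- termwise bounds for the A-term
  have hA2 : ((g : ℝ)+1)*(2*g+4) * s (g+2) ≤ A^2 + 3*A := by
    apply aux_term _ _ _ (by positivity)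
    nlinarith [Nat.cast_nonneg (α := ℝ) g]
  -- termwise bounds for the odd terms
  have hB : ∑ k ∈ Finset.Icc 1 (g/2), (8*(k : ℝ)^2 + 4*k - 1) * s (2*k+1)
      ≤ ∑ k ∈ Finset.Icc 1 (g/2), ((b k)^2 + 3*(b k)) := by
    apply Finset.sum_le_sum
    intro k hk
    have hk1 : (1:ℝ) ≤ k := by exact_mod_cast (Finset.mem_Icc.mp hk).1
    apply aux_term _ _ _ (by linarith)
    nlinarith
  have hC : ∑ k ∈ Finset.Icc 2 ((g+1)/2), (4*(k : ℝ)^2 - 2*k - 2) * s (2*k)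
      ≤ ∑ k ∈ Finset.Icc 2 ((g+1)/2), ((c k)^2 + 3*(c k)) := by
    apply Finset.sum_le_sum
    intro k hk
    have hk1 : (2:ℝ) ≤ k := by exact_mod_cast (Finset.mem_Icc.mp hk).1
    apply aux_term _ _ _ (by linarith)
    nlinarith
  -- nonnegativity
  have hbnn : ∀ k ∈ Finset.Icc 1 (g/2), 0 ≤ b k := by
    intro k hk
    have hk1 : (1:ℝ) ≤ k := by exact_mod_cast (Finset.mem_Icc.mp hk).1
    have : (0:ℝ) ≤ s (2*k+1) := Nat.cast_nonneg _
    simp only [hbdef]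
    nlinarith
  have hcnn : ∀ k ∈ Finset.Icc 2 ((g+1)/2), 0 ≤ c k := by
    intro k hk
    have hk1 : (2:ℝ) ≤ k := by exact_mod_cast (Finset.mem_Icc.mp hk).1
    have : (0:ℝ) ≤ s (2*k) := Nat.cast_nonneg _
    simp only [hcdef]
    nlinarith
  have hAnn : 0 ≤ A := by positivity
  have hBnn : 0 ≤ ∑ k ∈ Finset.Icc 1 (g/2), b k := Finset.sum_nonneg hbnn
  have hCnn : 0 ≤ ∑ k ∈ Finset.Icc 2 ((g+1)/2), c k := Finset.sum_nonneg hcnn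
  -- sum of squares bounds
  have hBsq : ∑ k ∈ Finset.Icc 1 (g/2), (b k)^2 ≤ (∑ k ∈ Finset.Icc 1 (g/2), b k)^2 :=
    Finset.sum_sq_le_sq_sum_of_nonneg hbnn
  have hCsq : ∑ k ∈ Finset.Icc 2 ((g+1)/2), (c k)^2
      ≤ (∑ k ∈ Finset.Icc 2 ((g+1)/2), c k)^2 :=
    Finset.sum_sq_le_sq_sum_of_nonneg hcnn
  rw [Finset.sum_add_distrib, ← Finset.mul_sum] at hB hC
  set SB := ∑ k ∈ Finset.Icc 1 (g/2), b k
  set SC := ∑ k ∈ Finset.Icc 2 ((g+1)/2), c k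
  -- key inequality: 2n(2g+1) - e ≤ P^2 + 3P with P = A + SB + SC
  have key : 2 * (n:ℝ) * (2*(g : ℝ)+1) - e ≤ (A + SB + SC)^2 + 3*(A + SB + SC) := by
    have cross : A^2 + SB^2 + SC^2 ≤ (A + SB + SC)^2 := by
      nlinarith [mul_nonneg hAnn hBnn, mul_nonneg hAnn hCnn, mul_nonneg hBnn hCnn]
    linarith [hA2, hB, hC, hBsq, hCsq, h2, cross]
  rw [← h1] at key
  have hn' : (0:ℝ) < n := by exact_mod_cast hn
  have h4n : (0:ℝ) < 4*n := by linarith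
  have hrhs : (lam - 4)^2/(4*n) * χ^2 + (lam - 4 + lam/(2*n)) * χ + n + 1
      = ((lam - 4)^2 * χ^2 + 4*n*(lam-4)*χ + 2*lam*χ + 4*(n:ℝ)^2 + 4*n) / (4*n) := by
    field_simp
    ring
  rw [hrhs, le_div_iff₀ h4n]
  nlinarith [key]
end

section
/- Let g ≥ 2 be an integer, χ ≥ 1, and t ≥ 0 reals. Suppose s₂ ≥ 0, s_{2k+1} ≥ 0 (1 ≤ k ≤ ⌊g/2⌋), s_{2k} ≥ 0 (2 ≤ k ≤ ⌊(g+1)/2⌋), s_{g+2} ≥ 0 are reals, not all zero among indices ≥ 3, with χ − gt/4 = ((g²−1)/4)s_{g+2} + Σ_{k=1}^{⌊g/2⌋} ((4k−1)g−4k²)/4 · s_{2k+1} + Σ_{k=2}^{⌊(g+1)/2⌋} ((k−1)(g−k))/2 · s_{2k}, and suppose the s_i for i ≥ 3 are nonnegative integers not all zero. Then χ − gt/4 ≥ (g−2)/2, and consequently g ≤ (4χ+4)/(2+t). -/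
open Finset

theorem stmt_4 (g : ℕ) (hg : 2 ≤ g) (χ t : ℝ) (hχ : 1 ≤ χ) (ht : 0 ≤ t)
    (s : ℕ → ℝ)
    (hs2 : 0 ≤ s 2)
    (hs : ∀ i, 3 ≤ i → i ≤ g + 2 → 0 ≤ s i)
    (hint : ∀ i, 3 ≤ i → ∃ m : ℕ, s i = m)
    (hne : ∃ i, 3 ≤ i ∧ i ≤ g + 2 ∧ s i ≠ 0)
    (heq : χ - (g : ℝ) * t / 4
      = (((g : ℝ)^2 - 1)/4) * s (g+2)
      + ∑ k ∈ Finset.Icc 1 (g/2), ((4*(k : ℝ)-1)*g - 4*(k : ℝ)^2)/4 * s (2*k+1)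
      + ∑ k ∈ Finset.Icc 2 ((g+1)/2), (((k : ℝ)-1)*((g : ℝ)-k))/2 * s (2*k)) :
    χ - (g : ℝ) * t / 4 ≥ ((g : ℝ) - 2)/2 ∧ (g : ℝ) ≤ (4*χ+4)/(2+t) := by
  have hg2 : (2:ℝ) ≤ (g:ℝ) := by exact_mod_cast hg
  set c : ℝ := ((g:ℝ) - 2)/2 with hc
  have hc0 : 0 ≤ c := by rw [hc]; linarith
  -- nonnegativity of summand s values
  have hsodd : ∀ k ∈ Finset.Icc 1 (g/2), 0 ≤ s (2*k+1) := by
    intro k hk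
    simp only [Finset.mem_Icc] at hk
    have h2k : 2*k ≤ g := by
      have := Nat.mul_div_le g 2
      omega
    exact hs _ (by omega) (by omega)
  have hseven : ∀ k ∈ Finset.Icc 2 ((g+1)/2), 0 ≤ s (2*k) := by
    intro k hk
    simp only [Finset.mem_Icc] at hk
    have h2k : 2*k ≤ g + 1 := by
      have := Nat.mul_div_le (g+1) 2
      omega
    exact hs _ (by omega) (by omega)
  have hsg2 : 0 ≤ s (g+2) := hs _ (by omega) (le_refl _)
  -- step 1: RHS ≥ c * T
  have step1 : χ - (g : ℝ) * t / 4
      ≥ c * s (g+2)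
      + ∑ k ∈ Finset.Icc 1 (g/2), c * s (2*k+1)
      + ∑ k ∈ Finset.Icc 2 ((g+1)/2), c * s (2*k) := by
    rw [heq]
    refine add_le_add (add_le_add ?_ ?_) ?_
    · refine mul_le_mul_of_nonneg_right ?_ hsg2
      rw [hc]; nlinarith [sq_nonneg ((g:ℝ) - 1)]
    · refine Finset.sum_le_sum fun k hk => ?_
      have h0 := hsodd k hk
      simp only [Finset.mem_Icc] at hk
      have h1 : (1:ℝ) ≤ (k:ℝ) := by exact_mod_cast hk.1
      have h2 : 2*(k:ℝ) ≤ (g:ℝ) := by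
        have h := Nat.mul_div_le g 2
        have : 2*k ≤ g := by omega
        exact_mod_cast this
      have hco : c ≤ ((4*(k : ℝ)-1)*(g:ℝ) - 4*(k : ℝ)^2)/4 := by
        rw [hc]
        nlinarith [mul_nonneg (by linarith : (0:ℝ) ≤ (g:ℝ) - 2*k) (by linarith : (0:ℝ) ≤ 4*(k:ℝ)-3), sq_nonneg ((k:ℝ)-1)]
      exact mul_le_mul_of_nonneg_right hco h0
    · refine Finset.sum_le_sum fun k hk => ?_
      have h0 := hseven k hk
      simp only [Finset.mem_Icc] at hk
      have h1 : (2:ℝ) ≤ (k:ℝ) := by exact_mod_cast hk.1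
      have h2 : 2*(k:ℝ) ≤ (g:ℝ) + 1 := by
        have h := Nat.mul_div_le (g+1) 2
        have : 2*k ≤ g+1 := by omega
        exact_mod_cast this
      have hco : c ≤ (((k : ℝ)-1)*((g : ℝ)-(k:ℝ)))/2 := by
        rw [hc]
        nlinarith [mul_nonneg (by linarith : (0:ℝ) ≤ (g:ℝ) - (2*k-1)) (by linarith : (0:ℝ) ≤ (k:ℝ)-2), sq_nonneg ((k:ℝ)-2)]
      exact mul_le_mul_of_nonneg_right hco h0
  -- step 2: T ≥ 1
  obtain ⟨i, hi3, hig, hine⟩ := hne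
  have hsi1 : 1 ≤ s i := by
    obtain ⟨m, hm⟩ := hint i hi3
    have : m ≠ 0 := by rintro rfl; simp at hm; exact hine hm
    rw [hm]
    exact_mod_cast Nat.one_le_iff_ne_zero.mpr this
  have hT : 1 ≤ s (g+2)
      + ∑ k ∈ Finset.Icc 1 (g/2), s (2*k+1)
      + ∑ k ∈ Finset.Icc 2 ((g+1)/2), s (2*k) := by
    have hS1 : 0 ≤ ∑ k ∈ Finset.Icc 1 (g/2), s (2*k+1) := Finset.sum_nonneg hsodd
    have hS2 : 0 ≤ ∑ k ∈ Finset.Icc 2 ((g+1)/2), s (2*k) := Finset.sum_nonneg hseven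
    rcases eq_or_lt_of_le hig with heq' | hlt
    · have : s (g+2) = s i := by rw [heq']
      linarith [hsi1, this ▸ hsi1]
    · have hig1 : i ≤ g + 1 := by omega
      rcases Nat.even_or_odd i with ⟨k, hk⟩ | ⟨k, hk⟩
      · -- i = 2k, k ≥ 2, 2k ≤ g+1
        have hmem : k ∈ Finset.Icc 2 ((g+1)/2) := by
          simp only [Finset.mem_Icc]
          omega
        have := Finset.single_le_sum hseven hmem
        have hik : s (2*k) = s i := by congr 1; omega
        linarith [hik ▸ this, hsi1]
      · -- i = 2k+1, k ≥ 1, 2k+1 ≤ g+1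
        have hmem : k ∈ Finset.Icc 1 (g/2) := by
          simp only [Finset.mem_Icc]
          omega
        have := Finset.single_le_sum hsodd hmem
        have hik : s (2*k+1) = s i := by congr 1; omega
        linarith [hik ▸ this, hsi1]
  have key : χ - (g : ℝ) * t / 4 ≥ c := by
    have : c * s (g+2)
      + ∑ k ∈ Finset.Icc 1 (g/2), c * s (2*k+1)
      + ∑ k ∈ Finset.Icc 2 ((g+1)/2), c * s (2*k)
      = c * (s (g+2)
      + ∑ k ∈ Finset.Icc 1 (g/2), s (2*k+1)
      + ∑ k ∈ Finset.Icc 2 ((g+1)/2), s (2*k)) := by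
      rw [mul_add, mul_add, Finset.mul_sum, Finset.mul_sum]
    rw [this] at step1
    calc χ - (g : ℝ) * t / 4 ≥ c * _ := step1
      _ ≥ c * 1 := by exact mul_le_mul_of_nonneg_left hT hc0
      _ = c := mul_one c
  refine ⟨key, ?_⟩
  rw [le_div_iff₀ (by linarith : (0:ℝ) < 2 + t)]
  have hgt : 0 ≤ (g:ℝ) * t := mul_nonneg (by linarith) ht
  nlinarith [key]
end

section
/- Let λ and χ be reals with 4 ≤ λ < 12 and χ ≥ 4, and define g(n) = ((λ−4)²/(4n))χ² + (λ−4 + λ/(2n))χ + n + 1 for real n > 0. Then g(2) ≥ g((λ−3)χ/2). -/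
/-!
Writing `g n = P / n + n + c` with `P = (λ-4)²χ²/4 + λχ/2`, the map `n ↦ P / n + n` decreases
on `(0, √P]`, so `g 2 ≥ g m` as soon as `2 ≤ m` and `2 m ≤ P`. For `m = (λ-3)χ/2` the first
condition is immediate and the second reduces to `(λ-4)²χ/4 + 3 - λ/2 ≥ 0`, where `χ ≥ 4` gives
`(λ-4)² - (λ-4)/2 + 1 > 0`.
-/

theorem div_add_le_div_add_of_mul_le {P a b : ℝ} (ha : 0 < a) (hab : a ≤ b) (hP : a * b ≤ P) :
    P / b + b ≤ P / a + a := by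
  have hb : 0 < b := ha.trans_le hab
  have key : P / a + a - (P / b + b) = (b - a) * (P - a * b) / (a * b) := by
    field_simp
    ring
  have : 0 ≤ (b - a) * (P - a * b) / (a * b) := by
    apply div_nonneg (mul_nonneg _ _) (mul_pos ha hb).le <;> linarith
  linarith

theorem sub_three_mul_le_genus_coeff {lam χ : ℝ} (hχ : 4 ≤ χ) :
    (lam - 3) * χ ≤ (lam - 4) ^ 2 * χ ^ 2 / 4 + lam * χ / 2 := by
  have hquad : 0 ≤ (lam - 4) ^ 2 * χ / 4 + 3 - lam / 2 := by
    nlinarith [mul_le_mul_of_nonneg_left hχ (sq_nonneg (lam - 4)), sq_nonneg (lam - 4 - 1 / 4)]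
  nlinarith [mul_nonneg (by linarith : (0 : ℝ) ≤ χ) hquad]

theorem stmt_6_general (lam χ : ℝ) (h1 : 4 ≤ lam) (h3 : 4 ≤ χ)
    (G : ℝ → ℝ)
    (hG : ∀ n, G n = (lam - 4)^2/(4*n) * χ^2 + (lam - 4 + lam/(2*n)) * χ + n + 1) :
    G 2 ≥ G ((lam - 3) * χ / 2) := by
  set P := (lam - 4) ^ 2 * χ ^ 2 / 4 + lam * χ / 2 with hP
  have hG' : ∀ n, G n = P / n + n + ((lam - 4) * χ + 1) := fun n => by
    rw [hG]
    ring
  have hmono : P / ((lam - 3) * χ / 2) + (lam - 3) * χ / 2 ≤ P / 2 + 2 :=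
    div_add_le_div_add_of_mul_le two_pos (by nlinarith)
      (by rw [hP]; linarith [sub_three_mul_le_genus_coeff (lam := lam) h3])
  rw [hG', hG', ge_iff_le]
  linarith

theorem stmt_6 (lam χ : ℝ) (h1 : 4 ≤ lam) (h2 : lam < 12) (h3 : 4 ≤ χ)
    (G : ℝ → ℝ)
    (hG : ∀ n, G n = (lam - 4)^2/(4*n) * χ^2 + (lam - 4 + lam/(2*n)) * χ + n + 1) :
    G 2 ≥ G ((lam - 3) * χ / 2) :=
  stmt_6_general lam χ h1 h3 G hG
end

section
/- There do not exist nonnegative integers s₂, s₃, s₄, s₆, s₈, s₁₀ and a positive integer n with g = 13 or larger such that g·s₂/4 + (g−1)s₃ + (g−1)s₄ + (3/2)(g−2)s₆ + 2(g−3)s₈ + (5/2)(g−4)s₁₀ = 2g+1 and s₃ + s₄ + 3s₆ + 6s₈ + 10s₁₀ = gn/2 − 1, unless g = 14, s₈ = 1, s₂ = 2, s₃ = s₄ = s₆ = s₁₀ = 0, n = 1, or the case g = 22, s₁₀ = 1, s₂ = 0 (which is excluded by the additional constraint K² ≤ 9 where K² computed from Xiao's formula equals 10). -/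
set_option maxHeartbeats 1000000


theorem stmt_9 (g n s2 s3 s4 s6 s8 s10 : ℕ) (hg : 13 ≤ g) (hn : 0 < n)
    (h1 : (g : ℝ) * s2 / 4 + ((g : ℝ) - 1) * s3 + ((g : ℝ) - 1) * s4
      + (3/2) * ((g : ℝ) - 2) * s6 + 2 * ((g : ℝ) - 3) * s8 + (5/2) * ((g : ℝ) - 4) * s10
      = 2 * (g : ℝ) + 1)
    (h2 : (s3 : ℝ) + s4 + 3 * s6 + 6 * s8 + 10 * s10 = (g : ℝ) * n / 2 - 1) :
    (g = 14 ∧ s8 = 1 ∧ s2 = 2 ∧ s3 = 0 ∧ s4 = 0 ∧ s6 = 0 ∧ s10 = 0 ∧ n = 1)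
    ∨ (g = 22 ∧ s10 = 1 ∧ s2 = 0) := by
  have key : g*s2 + 4*(g*s3) + 4*(g*s4) + 6*(g*s6) + 8*(g*s8) + 10*(g*s10)
      = 8*g + 4 + 4*s3 + 4*s4 + 12*s6 + 24*s8 + 40*s10 := by
    have : ((g*s2 + 4*(g*s3) + 4*(g*s4) + 6*(g*s6) + 8*(g*s8) + 10*(g*s10) : ℕ) : ℝ)
        = ((8*g + 4 + 4*s3 + 4*s4 + 12*s6 + 24*s8 + 40*s10 : ℕ) : ℝ) := by
      push_cast
      linear_combination 4*h1
    exact_mod_cast this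
  have h2' : g*n = 2*s3 + 2*s4 + 6*s6 + 12*s8 + 20*s10 + 2 := by
    have : ((g*n : ℕ) : ℝ) = ((2*s3 + 2*s4 + 6*s6 + 12*s8 + 20*s10 + 2 : ℕ) : ℝ) := by
      push_cast
      linear_combination -2*h2
    exact_mod_cast this
  -- let c = s2 + 4*s3 + 4*s4 + 6*s6 + 8*s8 + 10*s10
  have hc9 : 9 ≤ s2 + 4*s3 + 4*s4 + 6*s6 + 8*s8 + 10*s10 := by
    by_contra h
    push_neg at h
    nlinarith [key]
  have hc12 : s2 + 4*s3 + 4*s4 + 6*s6 + 8*s8 + 10*s10 ≤ 12 := by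
    nlinarith [key]
  have hg52 : g ≤ 52 := by
    nlinarith [key]
  have hgn : g ≤ g*n := Nat.le_mul_of_pos_right g hn
  have hs3 : s3 ≤ 3 := by omega
  have hs4 : s4 ≤ 3 := by omega
  have hs6 : s6 ≤ 2 := by omega
  have hs8 : s8 ≤ 1 := by omega
  have hs10 : s10 ≤ 1 := by omega
  have hn4 : n ≤ 4 := by nlinarith [h2', hg]
  interval_cases g <;>
    first
      | omega
      | (interval_cases n <;> interval_cases s10 <;> interval_cases s8 <;>
          interval_cases s6 <;> omega)
end

section
/- Let g ≥ 2 be an integer, n a positive integer, λ > 4 and χ > 0 reals with (λ−4)χ + 2n = (2g+2)s_{g+2} + Σ_{k=1}^{⌊g/2⌋}(4k−1)s_{2k+1} + Σ_{k=2}^{⌊(g+1)/2⌋}2(k−1)s_{2k} for nonnegative reals s_i, and suppose ((λ−4)g+4)/g · χ ≥ ((g−1)/(2g)) · ((2g+2)s_{g+2} + Σ_{k=1}^{⌊g/2⌋}(4k−1)s_{2k+1} + Σ_{k=2}^{⌊(g+1)/2⌋}2(k−1)s_{2k}). Then n ≤ ((λ−4)/2 + λ/(g−1))·χ. -/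
open Finset

theorem stmt_12 (g n : ℕ) (hg : 2 ≤ g) (hn : 0 < n)
    (lam χ : ℝ) (hlam : 4 < lam) (hχ : 0 < χ)
    (s : ℕ → ℝ) (hs : ∀ i, 3 ≤ i → i ≤ g + 2 → 0 ≤ s i)
    (h1 : (lam - 4) * χ + 2 * n
      = (2*(g : ℝ)+2) * s (g+2)
      + ∑ k ∈ Finset.Icc 1 (g/2), (4*(k : ℝ) - 1) * s (2*k+1)
      + ∑ k ∈ Finset.Icc 2 ((g+1)/2), 2*((k : ℝ) - 1) * s (2*k))
    (h2 : ((lam - 4)*(g : ℝ) + 4)/(g : ℝ) * χ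
      ≥ ((g : ℝ) - 1)/(2*(g : ℝ))
        * ((2*(g : ℝ)+2) * s (g+2)
          + ∑ k ∈ Finset.Icc 1 (g/2), (4*(k : ℝ) - 1) * s (2*k+1)
          + ∑ k ∈ Finset.Icc 2 ((g+1)/2), 2*((k : ℝ) - 1) * s (2*k))) :
    (n : ℝ) ≤ ((lam - 4)/2 + lam/((g : ℝ) - 1)) * χ := by
  set S := (2*(g : ℝ)+2) * s (g+2)
      + ∑ k ∈ Finset.Icc 1 (g/2), (4*(k : ℝ) - 1) * s (2*k+1)
      + ∑ k ∈ Finset.Icc 2 ((g+1)/2), 2*((k : ℝ) - 1) * s (2*k) with hSdef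
  have hG : (2:ℝ) ≤ (g:ℝ) := by exact_mod_cast hg
  have hg0 : (0:ℝ) < (g:ℝ) := by linarith
  have hg1 : (0:ℝ) < (g:ℝ) - 1 := by linarith
  rw [ge_iff_le] at h2
  have key : ((g:ℝ) - 1) * S ≤ 2 * ((lam - 4)*(g:ℝ) + 4) * χ := by
    rw [div_mul_eq_mul_div, div_mul_eq_mul_div,
      div_le_div_iff₀ (by positivity) hg0] at h2
    nlinarith [h2, hg0]
  rw [div_add_div _ _ (two_ne_zero) (ne_of_gt hg1), div_mul_eq_mul_div,
    le_div_iff₀ (by positivity : (0:ℝ) < 2 * ((g:ℝ) - 1))]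
  nlinarith [key, h1]
end
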